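/- arXiv:2007.09235 — 10 statements merged into one kernel-verified Lean document; each statement's English description precedes it below -/
import Mathlib

section
/- If H is an n×n real matrix with entries ±1 and H^T H = nI (a Hadamard matrix) with n ≥ 3, then n is divisible by 4. -/
open Matrix

def IsHadamardMatrix {n : ℕ} (H : Matrix (Fin n) (Fin n) ℝ) : Prop :=
  (∀ i j, H i j = 1 ∨ H i j = -1) ∧ Hᵀ * H = (n : ℝ) • 1

open scoped Classical in
noncomputable def lap {n : ℕ} (G : SimpleGraph (Fin n)) : Matrix (Fin n) (Fin n) ℝ :=
  G.lapMatrix ℝ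

def HadamardDiagonalizable {n : ℕ} (G : SimpleGraph (Fin n)) : Prop :=
  ∃ (H : Matrix (Fin n) (Fin n) ℝ) (Λ : Fin n → ℝ),
    IsHadamardMatrix H ∧ lap G = (n : ℝ)⁻¹ • (H * Matrix.diagonal Λ * Hᵀ)

/-! For three distinct columns `x`, `y`, `z` of `H`, every summand of
`∑ i, (x i + y i) * (x i + z i)` is `0` or `4`, while by orthogonality the sum is `⟪x, x⟫ = n`. -/

theorem Matrix.col_dotProduct_col_of_transpose_mul_self_eq_smul_one {m ι R : Type*} [Fintype m]
    [DecidableEq ι] [CommSemiring R] {M : Matrix m ι R} {c : R} (hM : Mᵀ * M = c • 1)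
    (j k : ι) : Mᵀ j ⬝ᵥ Mᵀ k = if j = k then c else 0 := by
  change (Mᵀ * M) j k = _
  simp [hM, Matrix.one_apply]

theorem Matrix.sum_col_add_mul_col_add_of_transpose_mul_self_eq_smul_one {m ι R : Type*}
    [Fintype m] [DecidableEq ι] [CommSemiring R] {M : Matrix m ι R} {c : R}
    (hM : Mᵀ * M = c • 1) {a b d : ι} (hab : a ≠ b) (had : a ≠ d) (hbd : b ≠ d) :
    ∑ i, (M i a + M i b) * (M i a + M i d) = c := by
  have hdot := col_dotProduct_col_of_transpose_mul_self_eq_smul_one hM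
  calc ∑ i, (M i a + M i b) * (M i a + M i d) = (Mᵀ a + Mᵀ b) ⬝ᵥ (Mᵀ a + Mᵀ d) := rfl
    _ = c := by
      simp [add_dotProduct, dotProduct_add, hdot, had, hab.symm, hbd]

theorem exists_add_mul_add_eq_four_mul_of_sign {x y z : ℝ} (hx : x = 1 ∨ x = -1)
    (hy : y = 1 ∨ y = -1) (hz : z = 1 ∨ z = -1) : ∃ k : ℕ, (x + y) * (x + z) = 4 * k := by
  have : (x + y) * (x + z) = 4 * 0 ∨ (x + y) * (x + z) = 4 * 1 := by
    rcases hx with rfl | rfl <;> rcases hy with rfl | rfl <;> rcases hz with rfl | rfl <;> norm_num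
  rcases this with h | h
  exacts [⟨0, by exact_mod_cast h⟩, ⟨1, by exact_mod_cast h⟩]

theorem hadamard_order_div_four {n : ℕ} (H : Matrix (Fin n) (Fin n) ℝ)
    (hH : IsHadamardMatrix H) (hn : 3 ≤ n) : 4 ∣ n := by
  obtain ⟨hsign, horth⟩ := hH
  have hsum := sum_col_add_mul_col_add_of_transpose_mul_self_eq_smul_one horth
    (a := ⟨0, by omega⟩) (b := ⟨1, by omega⟩) (d := ⟨2, by omega⟩)
    (by simp [Fin.ext_iff]) (by simp [Fin.ext_iff]) (by simp [Fin.ext_iff])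
  choose k hk using fun i => exists_add_mul_add_eq_four_mul_of_sign
    (hsign i ⟨0, by omega⟩) (hsign i ⟨1, by omega⟩) (hsign i ⟨2, by omega⟩)
  refine ⟨∑ i, k i, ?_⟩
  rw [Finset.sum_congr rfl fun i _ => hk i, ← Finset.mul_sum] at hsum
  exact_mod_cast hsum.symm
end

section
/- If a graph G is Hadamard diagonalizable, then G is regular, i.e., all vertices have the same degree. -/
/-! Since every entry of `H` squares to `1`, each diagonal entry of `H Λ Hᵀ` equals `∑ k, Λ k`;
so every diagonal entry of the Laplacian, i.e. every degree, equals `(∑ k, Λ k) / n`. -/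

open Matrix

theorem SimpleGraph.lapMatrix_apply_self {V : Type*} [Fintype V] [DecidableEq V]
    (G : SimpleGraph V) [DecidableRel G.Adj] (R : Type*) [AddGroupWithOne R] (v : V) :
    G.lapMatrix R v v = G.degree v := by
  simp [SimpleGraph.lapMatrix, SimpleGraph.degMatrix]

theorem lap_apply_self {n : ℕ} (G : SimpleGraph (Fin n)) [DecidableRel G.Adj] (v : Fin n) :
    lap G v v = G.degree v := by
  unfold lap
  convert G.lapMatrix_apply_self ℝ v

theorem Matrix.mul_diagonal_mul_transpose_apply_self {m k R : Type*} [Fintype k] [DecidableEq k]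
    [CommSemiring R] (A : Matrix m k R) (d : k → R) (i : m) :
    (A * diagonal d * Aᵀ) i i = ∑ j, A i j ^ 2 * d j := by
  rw [mul_apply]
  exact Finset.sum_congr rfl fun j _ => by rw [mul_diagonal, transpose_apply]; ring

theorem IsHadamardMatrix.sq_apply {n : ℕ} {H : Matrix (Fin n) (Fin n) ℝ}
    (hH : IsHadamardMatrix H) (i j : Fin n) : H i j ^ 2 = 1 := by
  rcases hH.1 i j with h | h <;> simp [h]

theorem hadamardDiagonalizable_regular {n : ℕ} (G : SimpleGraph (Fin n))
    [DecidableRel G.Adj] (hG : HadamardDiagonalizable G) :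
    ∀ u v : Fin n, G.degree u = G.degree v := by
  obtain ⟨H, Λ, hH, hL⟩ := hG
  have hdeg : ∀ u, (G.degree u : ℝ) = (n : ℝ)⁻¹ * ∑ k, Λ k := fun u => by
    rw [← lap_apply_self, hL, Matrix.smul_apply, mul_diagonal_mul_transpose_apply_self, smul_eq_mul]
    simp only [hH.sq_apply, one_mul]
  intro u v
  exact_mod_cast (hdeg u).trans (hdeg v).symm
end

section
/- If a graph G is Hadamard diagonalizable, then every eigenvalue of its Laplacian matrix is an even integer. -/
open Matrix

/-!
Since `Hᵀ H = n I`, the Laplacian `L` is similar to `diagonal Λ`, so every eigenvalue is some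
`Λ i`, and the `i`-th column of `H`, multiplied by the sign `H i i`, is an eigenvector `v` with
entries `±1` and `v i = 1`. The `i`-th row of `L v = Λ i • v` then reads
`Λ i = ∑_{u ∼ i} (1 - v u)`, a sum of terms in `{0, 2}`.
-/

theorem Matrix.hasEigenvalue_toLin'_iff_of_eq_mul_diagonal_mul {R ι : Type*} [CommRing R]
    [IsDomain R] [Fintype ι] [DecidableEq ι] {A P Q : Matrix ι ι R} {d : ι → R} {μ : R}
    (hQP : Q * P = 1) (hA : A = P * diagonal d * Q) :
    Module.End.HasEigenvalue (toLin' A) μ ↔ ∃ i, d i = μ := by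
  have hcharpoly : A.charpoly = (diagonal d).charpoly := by
    rw [hA, Matrix.mul_assoc, charpoly_mul_comm, Matrix.mul_assoc, hQP, Matrix.mul_one]
  rw [← hasEigenvalue_toLin'_diagonal_iff, Module.End.hasEigenvalue_iff_isRoot_charpoly,
    Module.End.hasEigenvalue_iff_isRoot_charpoly, charpoly_toLin', charpoly_toLin', hcharpoly]

theorem Matrix.mulVec_col_of_mul_eq_mul_diagonal {R ι : Type*} [CommRing R] [Fintype ι]
    [DecidableEq ι] {A P : Matrix ι ι R} {d : ι → R} (h : A * P = P * diagonal d) (i : ι) :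
    A *ᵥ P.col i = d i • P.col i := by
  ext j
  have hji := congrFun (congrFun h j) i
  rw [mul_diagonal, mul_apply] at hji
  simpa [mulVec, dotProduct, mul_comm] using hji

theorem IsHadamardMatrix.inv_smul_transpose_mul_self {n : ℕ} {H : Matrix (Fin n) (Fin n) ℝ}
    (hH : IsHadamardMatrix H) : ((n : ℝ)⁻¹ • Hᵀ) * H = 1 := by
  rcases Nat.eq_zero_or_pos n with rfl | hn
  · exact Subsingleton.elim _ _
  · rw [Matrix.smul_mul, hH.2, smul_smul, inv_mul_cancel₀ (by positivity), one_smul]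

theorem SimpleGraph.lapMatrix_mulVec_apply_of_eq_one {R V : Type*} [Ring R] [Fintype V]
    [DecidableEq V] (G : SimpleGraph V) [DecidableRel G.Adj] {x : V → R} {v : V} (hv : x v = 1) :
    (G.lapMatrix R *ᵥ x) v = ∑ u ∈ G.neighborFinset v, (1 - x u) := by
  rw [lapMatrix_mulVec_apply, hv, mul_one, Finset.sum_sub_distrib, Finset.sum_const,
    card_neighborFinset_eq_degree, nsmul_one]

theorem Finset.exists_sum_one_sub_eq_two_mul {R α : Type*} [Ring R] (s : Finset α) {f : α → R}
    (hf : ∀ a ∈ s, f a = 1 ∨ f a = -1) : ∃ k : ℤ, ∑ a ∈ s, (1 - f a) = 2 * k := by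
  have hterm : ∀ a ∈ s, ∃ k : ℤ, 1 - f a = 2 * k := fun a ha => by
    rcases hf a ha with h | h
    · exact ⟨0, by simp [h]⟩
    · exact ⟨1, by rw [h]; norm_num⟩
  choose! k hk using hterm
  exact ⟨∑ a ∈ s, k a, by rw [Finset.sum_congr rfl hk, Int.cast_sum, Finset.mul_sum]⟩

theorem hadamardDiagonalizable_even_eigenvalues {n : ℕ} (G : SimpleGraph (Fin n))
    (hG : HadamardDiagonalizable G) (μ : ℝ)
    (hμ : Module.End.HasEigenvalue (Matrix.toLin' (lap G)) μ) :
    ∃ k : ℤ, μ = 2 * k := by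
  classical
  obtain ⟨H, Λ, hH, hL⟩ := hG
  have hinv := hH.inv_smul_transpose_mul_self
  have hdecomp : lap G = H * diagonal Λ * ((n : ℝ)⁻¹ • Hᵀ) := by rw [hL, Matrix.mul_smul]
  obtain ⟨i, rfl⟩ := (hasEigenvalue_toLin'_iff_of_eq_mul_diagonal_mul hinv hdecomp).mp hμ
  set v := H i i • H.col i
  have hv : lap G *ᵥ v = Λ i • v := by
    have hLH : lap G * H = H * diagonal Λ := by rw [hdecomp, Matrix.mul_assoc, hinv, Matrix.mul_one]
    rw [mulVec_smul, mulVec_col_of_mul_eq_mul_diagonal hLH, smul_comm]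
  have hsign : ∀ j, v j = 1 ∨ v j = -1 := fun j => by
    rcases hH.1 i i with h | h <;> rcases hH.1 j i with h' | h' <;> simp [v, h, h']
  have hvi : v i = 1 := by rcases hH.1 i i with h | h <;> simp [v, h]
  obtain ⟨k, hk⟩ := (G.neighborFinset i).exists_sum_one_sub_eq_two_mul fun j _ => hsign j
  refine ⟨k, ?_⟩
  calc Λ i = (lap G *ᵥ v) i := by rw [hv, Pi.smul_apply, hvi, smul_eq_mul, mul_one]
    _ = ∑ j ∈ G.neighborFinset i, (1 - v j) := G.lapMatrix_mulVec_apply_of_eq_one hvi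
    _ = 2 * k := hk
end

section
/- Let G be a Hadamard diagonalizable graph on n vertices where n ≡ 4 (mod 8). Then G is one of: the complete graph K_n, the complete bipartite graph K_{n/2,n/2}, the disjoint union of two copies of K_{n/2}, or the empty graph on n vertices. -/
open Matrix

/-!
Each column `h` of `H` is a `±1` eigenvector of the Laplacian, and reading `L h = λ h` at one
vertex shows that `λ` is twice the number of neighbours on which `h` changes sign, so every
eigenvalue is an even integer. The diagonal of `n L = H Λ Hᵀ` shows that `G` is `d`-regular with
`n d = ∑ λₖ`. For distinct vertices `u, v, w` with `e` edges among them, the entries of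
`n L = H Λ Hᵀ` give `∑ₖ λₖ (hᵤhᵥ + hᵤh_w + hᵥh_w + 1) = n (d - e)`, and each summand is `0` or
`4 λₖ ∈ 8ℤ`. Since `n ≡ 4 (mod 8)`, this forces `e ≡ d (mod 2)` for every triple.

When `d` is even, every triple spans an even number of edges, so `G` is complete bipartite
between the non-neighbours and the neighbours of any fixed vertex; when `d` is odd, the same
holds for the complement. Regularity then makes the graph empty or the two sides of equal size.
-/

open Finset

lemma IsHadamardMatrix.mul_self_apply {n : ℕ} {H : Matrix (Fin n) (Fin n) ℝ}
    (hH : IsHadamardMatrix H) (i j : Fin n) : H i j * H i j = 1 := by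
  rcases hH.1 i j with h | h <;> simp [h]

lemma mul_add_mul_add_mul_add_one_eq_ite {a b c : ℝ} (ha : a = 1 ∨ a = -1)
    (hb : b = 1 ∨ b = -1) (hc : c = 1 ∨ c = -1) :
    a * b + a * c + b * c + 1 = if a = b ∧ a = c then 4 else 0 := by
  rcases ha with rfl | rfl <;> rcases hb with rfl | rfl <;> rcases hc with rfl | rfl <;> norm_num

lemma Int.even_of_natCast_mul_eq_eight_mul {n : ℕ} (hn : n % 8 = 4) {a M : ℤ}
    (h : n * a = 8 * M) : Even a := by
  obtain ⟨t, rfl⟩ : ∃ t, n = 8 * t + 4 := ⟨n / 8, by omega⟩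
  have hodd : ¬Even (2 * (t : ℤ) + 1) := Int.not_even_iff_odd.mpr (odd_two_mul_add_one _)
  refine (Int.even_mul.mp ⟨M, ?_⟩).resolve_left hodd
  push_cast at h
  linarith

namespace SimpleGraph

variable {V : Type*} {G : SimpleGraph V} [DecidableRel G.Adj]

def tripleEdgeParity (G : SimpleGraph V) [DecidableRel G.Adj] (u v w : V) : ZMod 2 :=
  G.adjMatrix (ZMod 2) u v + G.adjMatrix (ZMod 2) u w + G.adjMatrix (ZMod 2) v w

theorem intCast_adjMatrix_apply {R : Type*} [AddGroupWithOne R] (u v : V) :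
    ((G.adjMatrix ℤ u v : ℤ) : R) = G.adjMatrix R u v := by
  by_cases h : G.Adj u v <;> simp [h]

variable [DecidableEq V]

theorem tripleEdgeParity_compl {u v w : V} (huv : u ≠ v) (huw : u ≠ w) (hvw : v ≠ w) :
    Gᶜ.tripleEdgeParity u v w = G.tripleEdgeParity u v w + 1 := by
  unfold tripleEdgeParity
  by_cases h₁ : G.Adj u v <;> by_cases h₂ : G.Adj u w <;> by_cases h₃ : G.Adj v w <;>
    simp [h₁, h₂, h₃, huv, huw, hvw] <;> decide

theorem lapMatrix_apply_of_ne {R : Type*} [AddGroupWithOne R] [Fintype V] {u v : V}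
    (h : u ≠ v) : G.lapMatrix R u v = -G.adjMatrix R u v := by
  simp [lapMatrix, degMatrix, h]

theorem lapMatrix_apply_self_s7 {R : Type*} [AddGroupWithOne R] [Fintype V] (v : V) :
    G.lapMatrix R v v = G.degree v := by
  simp [lapMatrix, degMatrix]

variable [Fintype V]

theorem exists_eq_two_mul_of_lapMatrix_mulVec_eq_smul {x : V → ℝ}
    (hx : ∀ v, x v = 1 ∨ x v = -1) {μ : ℝ} (h : G.lapMatrix ℝ *ᵥ x = μ • x) (u : V) :
    ∃ m : ℕ, μ = 2 * m := by
  have hxu : x u * x u = 1 := by rcases hx u with h | h <;> simp [h]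
  have hterm : ∀ v, (x u - x v) * x u = if x v = x u then 0 else 2 := by
    intro v
    rcases hx u with h₁ | h₁ <;> rcases hx v with h₂ | h₂ <;> norm_num [h₁, h₂]
  have hu := congrFun h u
  rw [lapMatrix_mulVec_apply, Pi.smul_apply, smul_eq_mul, ← card_neighborFinset_eq_degree,
    ← nsmul_eq_mul, ← sum_const, ← sum_sub_distrib] at hu
  refine ⟨#{v ∈ G.neighborFinset u | ¬x v = x u}, ?_⟩
  calc μ = μ * x u * x u := by rw [mul_assoc, hxu, mul_one]
    _ = ∑ v ∈ G.neighborFinset u, (x u - x v) * x u := by rw [← hu, sum_mul]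
    _ = _ := by simp only [hterm, sum_ite, sum_const_zero, sum_const, nsmul_eq_mul]; ring

theorem exists_adj_iff_of_tripleEdgeParity_eq_zero
    (h : ∀ u v w, u ≠ v → u ≠ w → v ≠ w → G.tripleEdgeParity u v w = 0) :
    ∃ s : Finset V, ∀ u v, G.Adj u v ↔ ¬(u ∈ s ↔ v ∈ s) := by
  rcases isEmpty_or_nonempty V with hV | ⟨⟨u₀⟩⟩
  · exact ⟨∅, fun u => isEmptyElim u⟩
  refine ⟨({v | ¬G.Adj u₀ v} : Finset V), fun u v => ?_⟩
  simp only [mem_filter, mem_univ, true_and, not_iff_not]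
  by_cases huv : u = v
  · simp [huv]
  by_cases hu : u = u₀
  · subst hu; simp
  by_cases hv : v = u₀
  · subst hv; simp [G.adj_comm u]
  have := h u₀ u v (Ne.symm hu) (Ne.symm hv) huv
  simp only [tripleEdgeParity, adjMatrix_apply] at this
  by_cases h₁ : G.Adj u₀ u <;> by_cases h₂ : G.Adj u₀ v <;> by_cases h₃ : G.Adj u v <;>
    simp_all
  exact absurd this (by decide)

theorem IsRegularOfDegree.eq_bot_or_two_mul_card_eq {d : ℕ} (hG : G.IsRegularOfDegree d)
    {s : Finset V} (hs : ∀ u v, G.Adj u v ↔ ¬(u ∈ s ↔ v ∈ s)) :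
    G = ⊥ ∨ 2 * #s = Fintype.card V := by
  by_cases hsplit : ∃ a ∈ s, ∃ b, b ∉ s
  · obtain ⟨a, ha, b, hb⟩ := hsplit
    have hna : G.neighborFinset a = sᶜ := by ext v; simp [hs, ha]
    have hnb : G.neighborFinset b = s := by ext v; simp [hs, hb]
    have := (hG.degree_eq a).trans (hG.degree_eq b).symm
    rw [← card_neighborFinset_eq_degree, ← card_neighborFinset_eq_degree, hna, hnb,
      card_compl] at this
    right; have := s.card_le_univ; omega
  · push Not at hsplit
    left; ext u v
    simp only [hs, bot_adj, iff_false, not_not]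
    by_cases hu : u ∈ s
    · exact iff_of_true hu (hsplit u hu v)
    · exact iff_of_false hu fun hv => hu (hsplit v hv u)

theorem IsRegularOfDegree.eq_bot_or_exists_adj_iff {d : ℕ} (hG : G.IsRegularOfDegree d)
    (h : ∀ u v w, u ≠ v → u ≠ w → v ≠ w → G.tripleEdgeParity u v w = 0) :
    G = ⊥ ∨ ∃ s : Finset V, 2 * #s = Fintype.card V ∧ ∀ u v, G.Adj u v ↔ ¬(u ∈ s ↔ v ∈ s) := by
  obtain ⟨s, hs⟩ := exists_adj_iff_of_tripleEdgeParity_eq_zero h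
  exact (hG.eq_bot_or_two_mul_card_eq hs).imp_right fun hcard => ⟨s, hcard, hs⟩

end SimpleGraph

section HadamardSpectrum

open SimpleGraph
open scoped Classical

variable {n : ℕ} [NeZero n] {G : SimpleGraph (Fin n)} {H : Matrix (Fin n) (Fin n) ℝ}
  {Λ : Fin n → ℝ}

lemma natCast_mul_lap_apply (hL : lap G = (n : ℝ)⁻¹ • (H * diagonal Λ * Hᵀ)) (u v : Fin n) :
    n * lap G u v = ∑ k, Λ k * (H u k * H v k) := by
  rw [hL, Matrix.smul_apply, smul_eq_mul, ← mul_assoc, mul_inv_cancel₀ (NeZero.ne _), one_mul,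
    mul_apply]
  simp only [mul_diagonal, transpose_apply]
  exact sum_congr rfl fun k _ => by ring

lemma lap_mul_eq_mul_diagonal (hH : IsHadamardMatrix H)
    (hL : lap G = (n : ℝ)⁻¹ • (H * diagonal Λ * Hᵀ)) : lap G * H = H * diagonal Λ := by
  rw [hL, smul_mul, Matrix.mul_assoc _ Hᵀ H, hH.2, Matrix.mul_smul, Matrix.mul_one, smul_smul,
    inv_mul_cancel₀ (NeZero.ne _), one_smul]

lemma exists_eigenvalue_eq_two_mul (hH : IsHadamardMatrix H)
    (hL : lap G = (n : ℝ)⁻¹ • (H * diagonal Λ * Hᵀ)) (k : Fin n) : ∃ m : ℕ, Λ k = 2 * m := by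
  refine G.exists_eq_two_mul_of_lapMatrix_mulVec_eq_smul (x := fun v => H v k)
    (fun v => hH.1 v k) ?_ 0
  ext u
  have := congrFun (congrFun (lap_mul_eq_mul_diagonal hH hL) u) k
  rw [mul_diagonal, mul_apply] at this
  simpa [mulVec, dotProduct, lap, mul_comm] using this

lemma natCast_mul_degree (hH : IsHadamardMatrix H)
    (hL : lap G = (n : ℝ)⁻¹ • (H * diagonal Λ * Hᵀ)) (u : Fin n) :
    n * G.degree u = ∑ k, Λ k := by
  rw [← G.lapMatrix_apply_self_s7 (R := ℝ), ← lap, natCast_mul_lap_apply hL]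
  simp only [hH.mul_self_apply, mul_one]

lemma isRegularOfDegree_degree (hH : IsHadamardMatrix H)
    (hL : lap G = (n : ℝ)⁻¹ • (H * diagonal Λ * Hᵀ)) (u₀ : Fin n) :
    G.IsRegularOfDegree (G.degree u₀) := fun u => by
  have h := (natCast_mul_degree hH hL u).trans (natCast_mul_degree hH hL u₀).symm
  exact_mod_cast mul_left_cancel₀ (NeZero.ne _) h

lemma tripleEdgeParity_eq_degree (hn : n % 8 = 4) (hH : IsHadamardMatrix H)
    (hL : lap G = (n : ℝ)⁻¹ • (H * diagonal Λ * Hᵀ)) {u v w : Fin n}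
    (huv : u ≠ v) (huw : u ≠ w) (hvw : v ≠ w) :
    G.tripleEdgeParity u v w = G.degree u := by
  choose m hm using exists_eigenvalue_eq_two_mul hH hL
  set M : ℕ := ∑ k with H u k = H v k ∧ H u k = H w k, m k
  have hsum : ∑ k, Λ k * (H u k * H v k + H u k * H w k + H v k * H w k + 1) = 8 * (M : ℝ) := by
    rw [Nat.cast_sum, sum_filter, mul_sum]
    refine sum_congr rfl fun k _ => ?_
    rw [mul_add_mul_add_mul_add_one_eq_ite (hH.1 u k) (hH.1 v k) (hH.1 w k), hm k]
    split_ifs <;> ring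
  have hlap : ∑ k, Λ k * (H u k * H v k + H u k * H w k + H v k * H w k + 1) =
      n * (lap G u v + lap G u w + lap G v w + lap G u u) := by
    simp only [mul_add, natCast_mul_lap_apply hL, ← sum_add_distrib, hH.mul_self_apply]
  simp only [lap, G.lapMatrix_apply_of_ne huv, G.lapMatrix_apply_of_ne huw,
    G.lapMatrix_apply_of_ne hvw, G.lapMatrix_apply_self_s7, ← G.intCast_adjMatrix_apply (R := ℝ)]
    at hlap
  have hint : (n : ℤ) * (G.degree u - (G.adjMatrix ℤ u v + G.adjMatrix ℤ u w + G.adjMatrix ℤ v w))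
      = 8 * M := by
    exact_mod_cast (by push_cast; linarith [hlap.symm.trans hsum] :
      ((n * (G.degree u - (G.adjMatrix ℤ u v + G.adjMatrix ℤ u w + G.adjMatrix ℤ v w)) : ℤ) : ℝ)
        = ((8 * M : ℤ) : ℝ))
  have := ZMod.intCast_eq_zero_iff_even.mpr (Int.even_of_natCast_mul_eq_eight_mul hn hint)
  push_cast [G.intCast_adjMatrix_apply] at this
  exact (sub_eq_zero.mp this).symm

end HadamardSpectrum

open scoped Classical in
theorem hadamardDiagonalizable_of_mod_eight_eq_four {n : ℕ} (hn : n % 8 = 4)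
    (G : SimpleGraph (Fin n)) (hG : HadamardDiagonalizable G) :
    G = ⊤ ∨ G = ⊥ ∨
    (∃ A : Finset (Fin n), A.card = n / 2 ∧
      ∀ u v : Fin n, G.Adj u v ↔ (u ≠ v ∧ (u ∈ A ↔ v ∈ A))) ∨
    (∃ A : Finset (Fin n), A.card = n / 2 ∧
      ∀ u v : Fin n, G.Adj u v ↔ ¬(u ∈ A ↔ v ∈ A)) := by
  obtain ⟨H, Λ, hH, hL⟩ := hG
  have : NeZero n := ⟨by omega⟩
  have hreg := isRegularOfDegree_degree hH hL 0
  have hpar {u v w : Fin n} (huv : u ≠ v) (huw : u ≠ w) (hvw : v ≠ w) :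
      G.tripleEdgeParity u v w = G.degree 0 :=
    (tripleEdgeParity_eq_degree hn hH hL huv huw hvw).trans (congrArg _ (hreg.degree_eq u))
  rcases (show ∀ x : ZMod 2, x = 0 ∨ x = 1 by decide) (G.degree 0) with hd | hd
  · rcases hreg.eq_bot_or_exists_adj_iff fun u v w huv huw hvw => (hpar huv huw hvw).trans hd
      with hbot | ⟨A, hA, hadj⟩
    · exact Or.inr (Or.inl hbot)
    · exact Or.inr (Or.inr (Or.inr ⟨A, by simp at hA; omega, hadj⟩))
  · rcases hreg.compl.eq_bot_or_exists_adj_iff fun u v w huv huw hvw => by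
        rw [G.tripleEdgeParity_compl huv huw hvw, hpar huv huw hvw, hd]; decide
      with hbot | ⟨A, hA, hadj⟩
    · exact Or.inl (compl_eq_bot.mp hbot)
    · refine Or.inr (Or.inr (Or.inl ⟨A, by simp at hA; omega, fun u v => ?_⟩))
      have := hadj u v
      rw [SimpleGraph.compl_adj] at this
      by_cases huv : u = v
      · simp [huv]
      · tauto
end

section
/- Let G be a Hadamard diagonalizable graph on n vertices containing four distinct vertices u, v, w, x with uv, vw, wx edges and ux a non-edge. Then n is divisible by 8. -/
/-!
Every column `h` of `H` is a `±1` eigenvector of `L`, and reading off row `u` of `L h = μ h` shows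
that `μ` is twice the number of neighbours of `u` on which `h` changes sign. Adding the entries
`uv, ux, wv, wx` of `n L = H Λ Hᵀ` gives
`-3 n = ∑ₖ Λₖ (H_{uk} + H_{wk}) (H_{vk} + H_{xk})`, where each `Λₖ` is even and each product of two
sums of signs is divisible by `4`; hence `8 ∣ 3 n`.
-/

open Matrix

namespace SimpleGraph

open Finset

variable {V R : Type*} [Fintype V] [DecidableEq V] (G : SimpleGraph V) [DecidableRel G.Adj]

theorem lapMatrix_apply_of_adj [AddGroupWithOne R] {i j : V} (h : G.Adj i j) :
    G.lapMatrix R i j = -1 := by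
  simp [lapMatrix, degMatrix, diagonal_apply_ne _ h.ne, h]

theorem lapMatrix_apply_of_ne_of_not_adj [AddGroupWithOne R] {i j : V} (hne : i ≠ j)
    (h : ¬ G.Adj i j) : G.lapMatrix R i j = 0 := by
  simp [lapMatrix, degMatrix, diagonal_apply_ne _ hne, h]

theorem lapMatrix_eigenvalue_eq_two_mul_card [CommRing R] [DecidableEq R] {h : V → R}
    (hh : ∀ i, h i = 1 ∨ h i = -1) {μ : R} (hμ : G.lapMatrix R *ᵥ h = μ • h) (u : V) :
    μ = 2 * #{j ∈ G.neighborFinset u | h j ≠ h u} := by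
  have hu : h u * h u = 1 := by rcases hh u with hu | hu <;> simp [hu]
  have hrow : μ * h u = G.degree u * h u - ∑ j ∈ G.neighborFinset u, h j := by
    rw [← lapMatrix_mulVec_apply, hμ, Pi.smul_apply, smul_eq_mul]
  have hterm : ∀ j, 1 - h u * h j = 2 * if h j ≠ h u then 1 else 0 := by
    intro j
    by_cases hne : h j = h u
    · simp [hne, hu]
    · have hj : h j = -h u := by rcases hh u with hu' | hu' <;> rcases hh j with hj | hj <;> grind
      rw [if_pos hne, hj, mul_neg, hu]
      ring
  calc μ = μ * h u * h u := by rw [mul_assoc, hu, mul_one]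
    _ = ∑ j ∈ G.neighborFinset u, (1 - h u * h j) := by
      rw [hrow, sub_mul, Finset.sum_sub_distrib, Finset.sum_const, card_neighborFinset_eq_degree,
        Finset.sum_mul, mul_assoc, hu]
      simp [mul_comm]
    _ = 2 * #{j ∈ G.neighborFinset u | h j ≠ h u} := by
      simp_rw [hterm, ← Finset.mul_sum, Finset.sum_boole]

end SimpleGraph

theorem exists_int_add_eq_two_mul {R : Type*} [Ring R] {a b : R} (ha : a = 1 ∨ a = -1)
    (hb : b = 1 ∨ b = -1) : ∃ m : ℤ, a + b = 2 * m := by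
  rcases ha with rfl | rfl <;> rcases hb with rfl | rfl
  exacts [⟨1, by norm_num⟩, ⟨0, by simp⟩, ⟨0, by simp⟩, ⟨-1, by norm_num⟩]

theorem exists_int_add_mul_add_eq_four_mul {R : Type*} [CommRing R] {a b c d : R}
    (ha : a = 1 ∨ a = -1) (hb : b = 1 ∨ b = -1) (hc : c = 1 ∨ c = -1) (hd : d = 1 ∨ d = -1) :
    ∃ m : ℤ, (a + b) * (c + d) = 4 * m := by
  obtain ⟨k, hk⟩ := exists_int_add_eq_two_mul ha hb
  obtain ⟨l, hl⟩ := exists_int_add_eq_two_mul hc hd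
  exact ⟨k * l, by rw [hk, hl]; push_cast; ring⟩

namespace Matrix

variable {m n R : Type*} [Fintype n] [DecidableEq n] [CommRing R]

theorem mulVec_transpose_apply_eq_smul_of_mul_eq_mul_diagonal {A : Matrix m m R} [Fintype m]
    {P : Matrix m n R} {d : n → R} (h : A * P = P * diagonal d) (k : n) :
    A *ᵥ Pᵀ k = d k • Pᵀ k := by
  ext i
  have := congrFun (congrFun h i) k
  rw [mul_apply, mul_diagonal] at this
  simpa [mulVec, dotProduct, mul_comm] using this

theorem mul_diagonal_mul_transpose_apply (P : Matrix m n R) (d : n → R) (i j : m) :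
    (P * diagonal d * Pᵀ) i j = ∑ k, d k * P i k * P j k := by
  rw [mul_apply]
  simp only [mul_diagonal, transpose_apply]
  exact Finset.sum_congr rfl fun k _ => by ring

end Matrix

theorem IsHadamardMatrix.mul_eq_mul_diagonal {n : ℕ} {H L : Matrix (Fin n) (Fin n) ℝ}
    {Λ : Fin n → ℝ} (hH : IsHadamardMatrix H) (hn : (n : ℝ) ≠ 0)
    (hL : L = (n : ℝ)⁻¹ • (H * diagonal Λ * Hᵀ)) : L * H = H * diagonal Λ := by
  rw [hL, smul_mul, Matrix.mul_assoc, hH.2, Matrix.mul_smul, Matrix.mul_one, smul_smul,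
    inv_mul_cancel₀ hn, one_smul]

theorem eight_dvd_of_path_general {n : ℕ} (G : SimpleGraph (Fin n))
    (hG : HadamardDiagonalizable G) (u v w x : Fin n)
    (hux : u ≠ x)
    (h1 : G.Adj u v) (h2 : G.Adj v w) (h3 : G.Adj w x) (h4 : ¬ G.Adj u x) :
    8 ∣ n := by
  classical
  obtain ⟨H, Λ, hH, hL⟩ := hG
  have hn : (n : ℝ) ≠ 0 := by exact_mod_cast (Fin.pos u).ne'
  obtain ⟨m, hm⟩ : ∃ m : Fin n → ℕ, ∀ k, Λ k = 2 * m k :=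
    ⟨_, fun k => G.lapMatrix_eigenvalue_eq_two_mul_card (hH.1 · k)
      (mulVec_transpose_apply_eq_smul_of_mul_eq_mul_diagonal (hH.mul_eq_mul_diagonal hn hL) k) u⟩
  choose c hc using fun k => exists_int_add_mul_add_eq_four_mul
    (hH.1 u k) (hH.1 w k) (hH.1 v k) (hH.1 x k)
  have entry (a b) : (n : ℝ) * lap G a b = ∑ k, Λ k * H a k * H b k := by
    rw [hL, Matrix.smul_apply, smul_eq_mul, mul_inv_cancel_left₀ hn,
      mul_diagonal_mul_transpose_apply]
  have hpath : lap G u v + lap G u x + lap G w v + lap G w x = -3 := by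
    rw [lap, G.lapMatrix_apply_of_adj h1, G.lapMatrix_apply_of_ne_of_not_adj hux h4,
      G.lapMatrix_apply_of_adj h2.symm, G.lapMatrix_apply_of_adj h3]
    norm_num
  have key : ((-3 * n : ℤ) : ℝ) = ((8 * ∑ k, (m k : ℤ) * c k : ℤ) : ℝ) := by
    push_cast
    calc -3 * (n : ℝ) = n * (lap G u v + lap G u x + lap G w v + lap G w x) := by
          rw [hpath, mul_comm]
      _ = ∑ k, Λ k * ((H u k + H w k) * (H v k + H x k)) := by
          simp only [mul_add, entry, ← Finset.sum_add_distrib]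
          exact Finset.sum_congr rfl fun k _ => by ring
      _ = 8 * ∑ k, (m k : ℝ) * c k := by
          simp only [hm, hc, Finset.mul_sum]
          exact Finset.sum_congr rfl fun k _ => by ring
  have h8 : -3 * (n : ℤ) = 8 * ∑ k, (m k : ℤ) * c k := Int.cast_injective key
  omega

theorem eight_dvd_of_path {n : ℕ} (G : SimpleGraph (Fin n))
    (hG : HadamardDiagonalizable G) (u v w x : Fin n)
    (huv : u ≠ v) (huw : u ≠ w) (hux : u ≠ x) (hvw : v ≠ w) (hvx : v ≠ x) (hwx : w ≠ x)
    (h1 : G.Adj u v) (h2 : G.Adj v w) (h3 : G.Adj w x) (h4 : ¬ G.Adj u x) :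
    8 ∣ n :=
  eight_dvd_of_path_general G hG u v w x hux h1 h2 h3 h4
end

section
/- If n is even and there exists a Hadamard matrix of order n, then the disjoint union of two complete graphs on n/2 vertices, 2K_{n/2}, is Hadamard diagonalizable. -/
open Matrix

/-- The disjoint union of two complete graphs on `n/2` vertices each,
realized on `Fin n` with parts `{0,…,n/2-1}` and `{n/2,…,n-1}`. -/
def twoCliques (n : ℕ) : SimpleGraph (Fin n) where
  Adj u v := u ≠ v ∧ ((u : ℕ) < n / 2 ↔ (v : ℕ) < n / 2)
  symm := by refine ⟨?_⟩; intro u v h; exact ⟨h.1.symm, h.2.symm⟩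
  loopless := by refine ⟨?_⟩; intro u h; exact h.1 rfl

/-!
Negating rows and permuting rows preserve the Hadamard property. Negating rows makes one column
all ones; the orthogonality of a second column to it means that column has as many `1`s as `-1`s,
so a row permutation turns it into the sign vector `s` of the two blocks. With `n = m + m`,
`L(2K_m) = m I - (J + s sᵀ) / 2`, and since `H Hᵀ = n I` this is `(1/n) H Λ Hᵀ` where `Λ` is `m`
except for `0` at the two chosen columns.
-/

open Finset

section SignVector

variable {α : Type*} [Fintype α]

theorem sum_eq_two_mul_card_filter_eq_one_sub_card {v : α → ℝ}
    (hv : ∀ a, v a = 1 ∨ v a = -1) :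
    ∑ a, v a = 2 * #{a | v a = 1} - Fintype.card α := by
  have hv' : ∀ a, v a = 2 * (if v a = 1 then 1 else 0) - 1 := fun a => by
    rcases hv a with h | h <;> norm_num [h]
  rw [sum_congr rfl fun a _ => hv' a, sum_sub_distrib, ← mul_sum,
    sum_boole, sum_const, card_univ, nsmul_one]

theorem exists_perm_comp_eq_of_sum_eq {u v : α → ℝ} (hu : ∀ a, u a = 1 ∨ u a = -1)
    (hv : ∀ a, v a = 1 ∨ v a = -1) (huv : ∑ a, u a = ∑ a, v a) :
    ∃ σ : Equiv.Perm α, ∀ a, u (σ a) = v a := by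
  have hcard : #{a | v a = 1} = #{a | u a = 1} := by
    rw [sum_eq_two_mul_card_filter_eq_one_sub_card hu,
      sum_eq_two_mul_card_filter_eq_one_sub_card hv] at huv
    exact_mod_cast (by linarith : (#{a | v a = 1} : ℝ) = #{a | u a = 1})
  obtain ⟨σ, hσ⟩ := Equiv.Perm.exists_map_finset_eq _ _ hcard
  have hmem : ∀ a, u (σ a) = 1 ↔ v a = 1 := fun a => by
    simpa using (Finset.ext_iff.mp hσ (σ a)).symm
  refine ⟨σ, fun a => ?_⟩
  rcases hv a with h | h
  · exact h ▸ (hmem a).mpr h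
  · rcases hu (σ a) with h' | h'
    · exact absurd ((hmem a).mp h') (by rw [h]; norm_num)
    · rw [h, h']

end SignVector

section TwoCliques

variable {m : ℕ}

def blockSign (m : ℕ) (i : Fin (m + m)) : ℝ :=
  if (i : ℕ) < m then 1 else -1

theorem blockSign_eq_one_or_eq_neg_one (i : Fin (m + m)) :
    blockSign m i = 1 ∨ blockSign m i = -1 := by
  unfold blockSign; split_ifs <;> simp

theorem sum_blockSign : ∑ i, blockSign m i = 0 := by
  have hcard : #{i | blockSign m i = 1} = m := by
    norm_num [blockSign, Fin.card_filter_val_lt]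
  rw [sum_eq_two_mul_card_filter_eq_one_sub_card blockSign_eq_one_or_eq_neg_one, hcard,
    Fintype.card_fin]
  push_cast; ring

theorem twoCliques_adj_iff {i j : Fin (m + m)} :
    (twoCliques (m + m)).Adj i j ↔ i ≠ j ∧ ((i : ℕ) < m ↔ (j : ℕ) < m) := by
  simp only [twoCliques, show (m + m) / 2 = m by omega]

theorem adjMatrix_twoCliques_apply [DecidableRel (twoCliques (m + m)).Adj] (i j : Fin (m + m)) :
    (twoCliques (m + m)).adjMatrix ℝ i j =
      (1 + blockSign m i * blockSign m j) / 2 - if i = j then 1 else 0 := by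
  simp only [SimpleGraph.adjMatrix_apply, twoCliques_adj_iff, blockSign]
  split_ifs <;> simp_all

theorem degree_twoCliques [DecidableRel (twoCliques (m + m)).Adj] (i : Fin (m + m)) :
    ((twoCliques (m + m)).degree i : ℝ) = m - 1 := by
  simp only [SimpleGraph.degree_eq_sum_if_adj, ← SimpleGraph.adjMatrix_apply,
    adjMatrix_twoCliques_apply, sum_sub_distrib, ← sum_div, sum_add_distrib,
    ← mul_sum, sum_blockSign]
  simp

theorem lap_twoCliques_apply (i j : Fin (m + m)) :
    lap (twoCliques (m + m)) i j =
      (if i = j then (m : ℝ) else 0) - (1 + blockSign m i * blockSign m j) / 2 := by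
  classical
  rw [lap, SimpleGraph.lapMatrix, Matrix.sub_apply, SimpleGraph.degMatrix, diagonal_apply,
    adjMatrix_twoCliques_apply]
  split_ifs with hij
  · rw [hij, degree_twoCliques]; ring
  · ring

end TwoCliques

namespace IsHadamardMatrix

variable {n : ℕ} {H : Matrix (Fin n) (Fin n) ℝ}

theorem mul_transpose (hH : IsHadamardMatrix H) : H * Hᵀ = (n : ℝ) • 1 := by
  rcases Nat.eq_zero_or_pos n with rfl | hn
  · exact Subsingleton.elim _ _
  have hn' : (n : ℝ) ≠ 0 := by positivity
  have hinv : ((n : ℝ)⁻¹ • Hᵀ) * H = 1 := by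
    rw [smul_mul, hH.2, smul_smul, inv_mul_cancel₀ hn', one_smul]
  calc H * Hᵀ = (n : ℝ) • (H * ((n : ℝ)⁻¹ • Hᵀ)) := by
        rw [Matrix.mul_smul, smul_smul, mul_inv_cancel₀ hn', one_smul]
    _ = (n : ℝ) • 1 := by rw [mul_eq_one_comm.mp hinv]

theorem sum_mul_eq_zero (hH : IsHadamardMatrix H) {j k : Fin n} (hjk : j ≠ k) :
    ∑ i, H i j * H i k = 0 := by
  simpa [mul_apply, hjk] using congrFun (congrFun hH.2 j) k

theorem diagonal_mul {d : Fin n → ℝ} (hd : ∀ i, d i = 1 ∨ d i = -1)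
    (hH : IsHadamardMatrix H) : IsHadamardMatrix (diagonal d * H) := by
  have hdd : diagonal d * diagonal d = 1 := by
    rw [diagonal_mul_diagonal, ← diagonal_one]
    congr 1; funext i; rcases hd i with h | h <;> simp [h]
  refine ⟨fun i j => ?_, ?_⟩
  · rw [Matrix.diagonal_mul]
    rcases hd i with h | h <;> rcases hH.1 i j with h' | h' <;> simp [h, h']
  · rw [transpose_mul, diagonal_transpose, Matrix.mul_assoc, ← Matrix.mul_assoc (diagonal d),
      hdd, Matrix.one_mul, hH.2]

theorem submatrix_perm (σ : Equiv.Perm (Fin n)) (hH : IsHadamardMatrix H) :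
    IsHadamardMatrix (H.submatrix σ id) := by
  refine ⟨fun i j => hH.1 (σ i) j, ?_⟩
  rw [transpose_submatrix, ← Equiv.coe_refl, submatrix_mul_equiv, hH.2]
  simp

theorem exists_col_eq_one (hH : IsHadamardMatrix H) (z : Fin n) :
    ∃ H' : Matrix (Fin n) (Fin n) ℝ, IsHadamardMatrix H' ∧ ∀ i, H' i z = 1 :=
  ⟨diagonal (fun i => H i z) * H, hH.diagonal_mul (fun i => hH.1 i z),
    fun i => by rcases hH.1 i z with h | h <;> simp [Matrix.diagonal_mul, h]⟩

theorem exists_normalized {m : ℕ} {H : Matrix (Fin (m + m)) (Fin (m + m)) ℝ}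
    (hH : IsHadamardMatrix H) {z o : Fin (m + m)} (hzo : z ≠ o) :
    ∃ H' : Matrix (Fin (m + m)) (Fin (m + m)) ℝ,
      IsHadamardMatrix H' ∧ (∀ i, H' i z = 1) ∧ ∀ i, H' i o = blockSign m i := by
  obtain ⟨H₁, hH₁, hz⟩ := hH.exists_col_eq_one z
  have hsum : ∑ i, H₁ i o = ∑ i, blockSign m i := by
    rw [sum_blockSign, ← hH₁.sum_mul_eq_zero hzo]
    simp [hz]
  obtain ⟨σ, hσ⟩ :=
    exists_perm_comp_eq_of_sum_eq (fun i => hH₁.1 i o) blockSign_eq_one_or_eq_neg_one hsum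
  exact ⟨H₁.submatrix σ id, hH₁.submatrix_perm σ, fun i => hz (σ i), hσ⟩

theorem mul_diagonal_mul_transpose_apply (hH : IsHadamardMatrix H) (c : ℝ) (z o i j : Fin n) :
    (H * diagonal (c • (1 - Pi.single z 1 - Pi.single o 1 : Fin n → ℝ)) * Hᵀ) i j =
      c * ((if i = j then (n : ℝ) else 0) - H i z * H j z - H i o * H j o) := by
  have hrow : ∑ k, H i k * H j k = if i = j then (n : ℝ) else 0 := by
    simpa [mul_apply, one_apply] using congrFun (congrFun hH.mul_transpose i) j
  rw [mul_apply]
  simp_rw [mul_diagonal, transpose_apply]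
  simp only [Pi.smul_apply, Pi.sub_apply, Pi.one_apply, Pi.single_apply, smul_eq_mul, mul_sub,
    mul_one, mul_ite, mul_zero, sub_mul, ite_mul, zero_mul, sum_sub_distrib, sum_ite_eq',
    mem_univ, if_true]
  simp_rw [mul_right_comm _ c, ← sum_mul, hrow]
  split_ifs <;> ring

end IsHadamardMatrix

theorem twoCliques_hadamardDiagonalizable {n : ℕ} (hn : Even n)
    (hH : ∃ H : Matrix (Fin n) (Fin n) ℝ, IsHadamardMatrix H) :
    HadamardDiagonalizable (twoCliques n) := by
  obtain ⟨m, rfl⟩ := hn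
  obtain ⟨H₀, hH₀⟩ := hH
  rcases Nat.eq_zero_or_pos m with rfl | hm
  · exact ⟨H₀, 0, hH₀, by ext i; exact i.elim0⟩
  let z : Fin (m + m) := ⟨0, by omega⟩
  let o : Fin (m + m) := ⟨1, by omega⟩
  obtain ⟨H, hH, hz, ho⟩ := hH₀.exists_normalized (z := z) (o := o) (by simp [z, o, Fin.ext_iff])
  refine ⟨H, (m : ℝ) • (1 - Pi.single z 1 - Pi.single o 1), hH, ?_⟩
  ext i j
  rw [lap_twoCliques_apply, Matrix.smul_apply, hH.mul_diagonal_mul_transpose_apply, hz, hz, ho, ho,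
    smul_eq_mul, Nat.cast_add]
  have hm' : (m : ℝ) ≠ 0 := by positivity
  field_simp
  split_ifs <;> ring
end

section
/- Let H be a normalized Hadamard matrix of order n, written in block form with first row and first column all ones and Ĥ the lower-right (n-1)×(n-1) block. Then (1/n)Ĥ is invertible with inverse Ĥ^T − J, where J is the (n-1)×(n-1) all-ones matrix. -/
open Matrix

/-! Write `Ĥ` for `M.submatrix Fin.succ Fin.succ` and `J` for the all-ones matrix. If the first
row and column of `M` are all ones, each entry of `Mᵀ * M` is an entry of `Ĥᵀ * Ĥ` or a column sum
of `Ĥ`, shifted by one. So `Mᵀ * M = c • 1` says `Ĥᵀ * Ĥ = c • 1 - J` and `J * Ĥ = -J`, whence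
`(Ĥᵀ - J) * Ĥ = c • 1`; a one-sided inverse of a square matrix is two-sided. -/

namespace Matrix

variable {R : Type*} [CommRing R] {n : ℕ} {M : Matrix (Fin (n + 1)) (Fin (n + 1)) R} {c : R}

variable (M) in
theorem transpose_mul_self_apply_succ_succ (i j : Fin n) :
    (Mᵀ * M) i.succ j.succ =
      M 0 i.succ * M 0 j.succ +
        ((M.submatrix Fin.succ Fin.succ)ᵀ * M.submatrix Fin.succ Fin.succ) i j := by
  simp only [mul_apply, Fin.sum_univ_succ, transpose_apply, submatrix_apply]

variable (M) in
theorem transpose_mul_self_apply_zero_succ (j : Fin n) :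
    (Mᵀ * M) 0 j.succ = M 0 0 * M 0 j.succ + ∑ k : Fin n, M k.succ 0 * M k.succ j.succ := by
  simp only [mul_apply, Fin.sum_univ_succ, transpose_apply]

theorem ones_mul_submatrix_succ (hrow : ∀ j, M 0 j = 1) (hcol : ∀ i, M i 0 = 1)
    (hM : Mᵀ * M = c • 1) :
    (of fun _ _ : Fin n => (1 : R)) * M.submatrix Fin.succ Fin.succ = -of fun _ _ => 1 := by
  ext i j
  have h := transpose_mul_self_apply_zero_succ M j
  rw [hM, smul_apply, one_apply_ne (Fin.succ_ne_zero j).symm, smul_zero] at h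
  simp only [hrow, hcol, one_mul] at h
  simp only [mul_apply, of_apply, submatrix_apply, one_mul, neg_apply]
  linear_combination -h

theorem submatrix_succ_transpose_mul_self (hrow : ∀ j, M 0 j = 1) (hM : Mᵀ * M = c • 1) :
    (M.submatrix Fin.succ Fin.succ)ᵀ * M.submatrix Fin.succ Fin.succ =
      c • 1 - of fun _ _ => 1 := by
  ext i j
  have h := transpose_mul_self_apply_succ_succ M i j
  rw [hM, hrow, hrow, one_mul] at h
  simp only [sub_apply, of_apply, smul_apply, one_apply, Fin.succ_inj] at h ⊢
  linear_combination -h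

theorem transpose_sub_ones_mul_submatrix_succ (hrow : ∀ j, M 0 j = 1) (hcol : ∀ i, M i 0 = 1)
    (hM : Mᵀ * M = c • 1) :
    ((M.submatrix Fin.succ Fin.succ)ᵀ - of fun _ _ => 1) * M.submatrix Fin.succ Fin.succ =
      c • 1 := by
  rw [sub_mul, submatrix_succ_transpose_mul_self hrow hM, ones_mul_submatrix_succ hrow hcol hM,
    sub_neg_eq_add, sub_add_cancel]

end Matrix

theorem normalized_hadamard_block_inverse {n : ℕ}
    (H : Matrix (Fin (n + 1)) (Fin (n + 1)) ℝ) (hH : IsHadamardMatrix H)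
    (hrow : ∀ j, H 0 j = 1) (hcol : ∀ i, H i 0 = 1) :
    (((n + 1 : ℝ))⁻¹ • (Matrix.of fun i j : Fin n => H i.succ j.succ)) *
        ((Matrix.of fun i j : Fin n => H i.succ j.succ)ᵀ -
          Matrix.of fun _ _ : Fin n => (1 : ℝ)) = 1 ∧
    ((Matrix.of fun i j : Fin n => H i.succ j.succ)ᵀ -
          Matrix.of fun _ _ : Fin n => (1 : ℝ)) *
        (((n + 1 : ℝ))⁻¹ • (Matrix.of fun i j : Fin n => H i.succ j.succ)) = 1 := by
  have hHn : Hᵀ * H = (n + 1 : ℝ) • 1 := by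
    rw [hH.2]
    push_cast
    rfl
  have hleft := transpose_sub_ones_mul_submatrix_succ hrow hcol hHn
  have hinv : ((H.submatrix Fin.succ Fin.succ)ᵀ - of fun _ _ => 1) *
      ((n + 1 : ℝ)⁻¹ • H.submatrix Fin.succ Fin.succ) = 1 := by
    rw [Matrix.mul_smul, hleft, smul_smul, inv_mul_cancel₀ (by positivity), one_smul]
  exact ⟨mul_eq_one_comm.mp hinv, hinv⟩
end

section
/- Let G be a Hadamard diagonalizable graph with Laplacian L, diagonalized by a normalized Hadamard matrix H with eigenvalues λ_1 = 0, λ_2, ..., λ_n corresponding to the columns of H. Then the vector (λ_2, ..., λ_n) is uniquely determined by the first-row entries L_{12}, ..., L_{1n}; explicitly, (λ_2,...,λ_n)^T = (Ĥ^T − J)(L_{12},...,L_{1n})^T where Ĥ is H with first row and column deleted and J is the all-ones matrix. -/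
open Matrix

/-! Since `Hᵀ H = (n + 1) I`, the decomposition `L = (n + 1)⁻¹ H Λ Hᵀ` says `L H = H Λ`: column
`k` of `H` is an eigenvector of `L` for `λ_k`. Reading this at row `0`, where `H` is all ones,
gives `λ_k = ∑_j L_{0j} H_{jk}`; subtracting the vanishing row sum `∑_j L_{0j}` kills the `j = 0`
term, because `H_{0k} - 1 = 0`. -/

theorem Matrix.mul_eq_mul_diagonal_of_eq_smul_mul_diagonal_mul_transpose
    {ι K : Type*} [Fintype ι] [DecidableEq ι] [Field K] {H L : Matrix ι ι K} {Λ : ι → K} {c : K}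
    (hc : c ≠ 0) (hH : Hᵀ * H = c • 1) (hL : L = c⁻¹ • (H * diagonal Λ * Hᵀ)) :
    L * H = H * diagonal Λ := by
  rw [hL, smul_mul, Matrix.mul_assoc, hH, Matrix.mul_smul, Matrix.mul_one, smul_smul,
    inv_mul_cancel₀ hc, one_smul]

theorem lap_sum_row_eq_zero {n : ℕ} (G : SimpleGraph (Fin n)) (i : Fin n) :
    ∑ j, lap G i j = 0 := by
  classical
  simpa [mulVec, dotProduct, lap] using congrFun (G.lapMatrix_mulVec_const_eq_zero (R := ℝ)) i

theorem eigenvalues_determined_by_first_row_general {n : ℕ} (G : SimpleGraph (Fin (n + 1)))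
    (H : Matrix (Fin (n + 1)) (Fin (n + 1)) ℝ) (hH : IsHadamardMatrix H)
    (hrow : ∀ j, H 0 j = 1)
    (Λ : Fin (n + 1) → ℝ)
    (hdiag : lap G = ((n + 1 : ℝ))⁻¹ • (H * Matrix.diagonal Λ * Hᵀ)) :
    ∀ i : Fin n, Λ i.succ = ∑ j : Fin n, (H j.succ i.succ - 1) * lap G 0 j.succ := by
  intro i
  have hLH : lap G * H = H * diagonal Λ :=
    mul_eq_mul_diagonal_of_eq_smul_mul_diagonal_mul_transpose (by positivity)
      (by exact_mod_cast hH.2) hdiag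
  have heig : ∑ j, lap G 0 j * H j i.succ = Λ i.succ := by
    rw [← mul_apply, hLH, mul_diagonal, hrow, one_mul]
  have hsum := lap_sum_row_eq_zero G 0
  rw [Fin.sum_univ_succ, hrow, mul_one] at heig
  rw [Fin.sum_univ_succ] at hsum
  simp only [sub_mul, one_mul, Finset.sum_sub_distrib, mul_comm (H _ _)]
  linarith

theorem eigenvalues_determined_by_first_row {n : ℕ} (G : SimpleGraph (Fin (n + 1)))
    (H : Matrix (Fin (n + 1)) (Fin (n + 1)) ℝ) (hH : IsHadamardMatrix H)
    (hrow : ∀ j, H 0 j = 1) (hcol : ∀ i, H i 0 = 1)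
    (Λ : Fin (n + 1) → ℝ) (hΛ0 : Λ 0 = 0)
    (hdiag : lap G = ((n + 1 : ℝ))⁻¹ • (H * Matrix.diagonal Λ * Hᵀ)) :
    ∀ i : Fin n, Λ i.succ = ∑ j : Fin n, (H j.succ i.succ - 1) * lap G 0 j.succ :=
  eigenvalues_determined_by_first_row_general G H hH hrow Λ hdiag
end

section
/- If G₁ and G₂ are Hadamard diagonalizable graphs, then the lexicographic product G₁ ≀ G₂ is Hadamard diagonalizable; moreover, if H₁ diagonalizes G₁ and H₂ diagonalizes G₂ (both normalized), then the Kronecker product H₁ ⊗ H₂ diagonalizes G₁ ≀ G₂. -/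
open Matrix

/-- A Hadamard matrix indexed by an arbitrary finite type. -/
def IsHadamardMatrixGen {ι : Type*} [Fintype ι] [DecidableEq ι]
    (H : Matrix ι ι ℝ) : Prop :=
  (∀ i j, H i j = 1 ∨ H i j = -1) ∧ Hᵀ * H = (Fintype.card ι : ℝ) • 1

/-- The lexicographic product `G₁ ≀ G₂`. -/
def lexProd {α β : Type*} (G₁ : SimpleGraph α) (G₂ : SimpleGraph β) :
    SimpleGraph (α × β) where
  Adj p q := G₁.Adj p.1 q.1 ∨ (p.1 = q.1 ∧ G₂.Adj p.2 q.2)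
  symm := by
    constructor
    rintro p q (h | ⟨h1, h2⟩)
    · exact Or.inl h.symm
    · exact Or.inr ⟨h1.symm, h2.symm⟩
  loopless := by
    constructor
    rintro p (h | ⟨h1, h2⟩)
    · exact G₁.irrefl h
    · exact G₂.irrefl h2

open scoped Classical in
noncomputable def lapP {m n : ℕ} (G : SimpleGraph (Fin m × Fin n)) :
    Matrix (Fin m × Fin n) (Fin m × Fin n) ℝ :=
  G.lapMatrix ℝ

/-! A graph whose Laplacian is `H * diagonal Λ * Hᵀ` with `H` a `±1` matrix is regular, since the
diagonal of `H * diagonal Λ * Hᵀ` is the constant `∑ Λ`. Hence for `G₁` `d₁`-regular and `G₂`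
`d₂`-regular, `L(G₁ ≀ G₂) = (n d₁ + d₂) (1 ⊗ 1) - 1 ⊗ A(G₂) - A(G₁) ⊗ J`. Here `1` and
`A(Gᵢ) = dᵢ 1 - L(Gᵢ)` are diagonalized by `Hᵢ`, and so is `J` by `H₂`, whose first column is all
ones; and `M₁ ⊗ M₂` is diagonalized by `H₁ ⊗ H₂` whenever `Mᵢ` is diagonalized by `Hᵢ`. -/

open Kronecker

namespace Matrix

variable {ι κ R : Type*} [Fintype ι] [Fintype κ] [DecidableEq ι] [DecidableEq κ]

section CommSemiring

variable [CommSemiring R]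

/-- When `Hᵀ * H = k • 1` with `k` invertible, `H⁻¹ = k⁻¹ • Hᵀ`, so these are exactly the matrices
diagonalized by `H`. -/
def diagonalizedBy (H : Matrix ι ι R) : Submodule R (Matrix ι ι R) where
  carrier := {M | ∃ Λ, H * diagonal Λ * Hᵀ = M}
  add_mem' := by
    rintro _ _ ⟨Λ, rfl⟩ ⟨Λ', rfl⟩
    exact ⟨Λ + Λ', by rw [← Matrix.add_mul, ← Matrix.mul_add, diagonal_add]; rfl⟩
  zero_mem' := ⟨0, by simp⟩
  smul_mem' := by
    rintro c _ ⟨Λ, rfl⟩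
    exact ⟨c • Λ, by rw [diagonal_smul, Matrix.mul_smul, Matrix.smul_mul]⟩

theorem mul_diagonal_mul_transpose_apply_s16 (H : Matrix ι ι R) (Λ : ι → R) (i j : ι) :
    (H * diagonal Λ * Hᵀ) i j = ∑ l, H i l * Λ l * H j l := by
  rw [mul_apply]
  simp only [mul_diagonal, transpose_apply]

theorem mul_transpose_mem_diagonalizedBy (H : Matrix ι ι R) : H * Hᵀ ∈ diagonalizedBy H :=
  ⟨fun _ => 1, by rw [diagonal_one, Matrix.mul_one]⟩

theorem of_one_mem_diagonalizedBy {H : Matrix ι ι R} {j₀ : ι} (h : ∀ i, H i j₀ = 1) :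
    of (fun _ _ => 1) ∈ diagonalizedBy H := by
  refine ⟨Pi.single j₀ 1, ?_⟩
  ext i j
  rw [mul_diagonal_mul_transpose_apply_s16, Finset.sum_eq_single j₀ (by simp_all) (by simp)]
  simp [h]

theorem kronecker_mem_diagonalizedBy {H₁ M₁ : Matrix ι ι R} {H₂ M₂ : Matrix κ κ R}
    (h₁ : M₁ ∈ diagonalizedBy H₁) (h₂ : M₂ ∈ diagonalizedBy H₂) :
    M₁ ⊗ₖ M₂ ∈ diagonalizedBy (H₁ ⊗ₖ H₂) := by
  obtain ⟨Λ₁, rfl⟩ := h₁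
  obtain ⟨Λ₂, rfl⟩ := h₂
  refine ⟨fun p => Λ₁ p.1 * Λ₂ p.2, ?_⟩
  rw [← diagonal_kronecker_diagonal, ← kroneckerMap_transpose, ← mul_kronecker_mul,
    ← mul_kronecker_mul]

end CommSemiring

theorem mul_diagonal_mul_transpose_apply_self_of_sign [CommRing R] {H : Matrix ι ι R}
    (hH : ∀ i j, H i j = 1 ∨ H i j = -1) (Λ : ι → R) (i : ι) :
    (H * diagonal Λ * Hᵀ) i i = ∑ l, Λ l := by
  rw [mul_diagonal_mul_transpose_apply_s16]
  refine Finset.sum_congr rfl fun l _ => ?_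
  rcases hH i l with h | h <;> simp [h]

theorem one_mem_diagonalizedBy [Field R] {H : Matrix ι ι R} {k : R} (hk : k ≠ 0)
    (h : Hᵀ * H = k • 1) : 1 ∈ diagonalizedBy H := by
  have hinv : H * (k⁻¹ • Hᵀ) = 1 :=
    mul_eq_one_comm.mp (by rw [Matrix.smul_mul, h, smul_smul, inv_mul_cancel₀ hk, one_smul])
  rw [← hinv, Matrix.mul_smul]
  exact Submodule.smul_mem _ _ (mul_transpose_mem_diagonalizedBy H)

end Matrix

theorem IsHadamardMatrix.isHadamardMatrixGen {n : ℕ} {H : Matrix (Fin n) (Fin n) ℝ}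
    (h : IsHadamardMatrix H) : IsHadamardMatrixGen H := by
  rw [IsHadamardMatrixGen, Fintype.card_fin]
  exact h

theorem IsHadamardMatrixGen.kronecker {ι κ : Type*} [Fintype ι] [Fintype κ] [DecidableEq ι]
    [DecidableEq κ] {H₁ : Matrix ι ι ℝ} {H₂ : Matrix κ κ ℝ} (h₁ : IsHadamardMatrixGen H₁)
    (h₂ : IsHadamardMatrixGen H₂) : IsHadamardMatrixGen (H₁ ⊗ₖ H₂) := by
  refine ⟨fun p q => ?_, ?_⟩
  · rcases h₁.1 p.1 q.1 with h | h <;> rcases h₂.1 p.2 q.2 with h' | h' <;> simp [h, h']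
  · rw [← Matrix.kroneckerMap_transpose, ← Matrix.mul_kronecker_mul, h₁.2, h₂.2,
      Matrix.smul_kronecker, Matrix.kronecker_smul, Matrix.one_kronecker_one, smul_smul,
      Fintype.card_prod, Nat.cast_mul]

namespace SimpleGraph

variable {V α β R : Type*} [Fintype V] [DecidableEq V]

theorem IsRegularOfDegree.lapMatrix_eq [Ring R] {G : SimpleGraph V}
    [DecidableRel G.Adj] {d : ℕ} (h : G.IsRegularOfDegree d) :
    G.lapMatrix R = (d : R) • 1 - G.adjMatrix R := by
  ext i j
  simp [lapMatrix, degMatrix, Matrix.diagonal_apply, Matrix.one_apply, h.degree_eq]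

theorem IsRegularOfDegree.adjMatrix_mem [Ring R] {G : SimpleGraph V} [DecidableRel G.Adj] {d : ℕ}
    (h : G.IsRegularOfDegree d) {S : Submodule R (Matrix V V R)} (hS : 1 ∈ S)
    (hG : G.lapMatrix R ∈ S) : G.adjMatrix R ∈ S := by
  rw [← sub_sub_cancel ((d : R) • 1) (G.adjMatrix R), ← h.lapMatrix_eq]
  exact sub_mem (S.smul_mem _ hS) hG

theorem exists_isRegularOfDegree_of_lapMatrix_mem_diagonalizedBy (G : SimpleGraph V)
    [DecidableRel G.Adj] {H : Matrix V V ℝ} (hH : ∀ i j, H i j = 1 ∨ H i j = -1)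
    (hG : G.lapMatrix ℝ ∈ Matrix.diagonalizedBy H) : ∃ d, G.IsRegularOfDegree d := by
  obtain ⟨Λ, hΛ⟩ := hG
  have hdeg : ∀ v, (G.degree v : ℝ) = ∑ l, Λ l := fun v => by
    rw [← Matrix.mul_diagonal_mul_transpose_apply_self_of_sign hH Λ v, hΛ]
    simp [lapMatrix, degMatrix]
  rcases isEmpty_or_nonempty V with hV | ⟨⟨v₀⟩⟩
  · exact ⟨0, fun v => hV.elim v⟩
  · exact ⟨G.degree v₀, fun v => by exact_mod_cast (hdeg v).trans (hdeg v₀).symm⟩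

section lexProd

variable (G₁ : SimpleGraph α) (G₂ : SimpleGraph β)

@[simp]
theorem lexProd_adj {p q : α × β} :
    (lexProd G₁ G₂).Adj p q ↔ G₁.Adj p.1 q.1 ∨ (p.1 = q.1 ∧ G₂.Adj p.2 q.2) :=
  Iff.rfl

variable [DecidableEq α] [DecidableRel G₁.Adj] [DecidableRel G₂.Adj]
  [DecidableRel (lexProd G₁ G₂).Adj]

theorem adjMatrix_lexProd [Semiring R] :
    (lexProd G₁ G₂).adjMatrix R =
      1 ⊗ₖ G₂.adjMatrix R + G₁.adjMatrix R ⊗ₖ Matrix.of (fun _ _ => 1) := by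
  ext ⟨u, x⟩ ⟨v, y⟩
  by_cases huv : u = v
  · subst huv
    simp [adjMatrix_apply]
  · by_cases h : G₁.Adj u v <;> simp [adjMatrix_apply, huv, h]

variable [Fintype α] [Fintype β] [DecidableEq β]

theorem neighborFinset_lexProd (u : α) (x : β) :
    (lexProd G₁ G₂).neighborFinset (u, x) =
      G₁.neighborFinset u ×ˢ Finset.univ ∪ {u} ×ˢ G₂.neighborFinset x := by
  ext ⟨v, y⟩
  simp [eq_comm, and_comm]

theorem degree_lexProd (u : α) (x : β) :
    (lexProd G₁ G₂).degree (u, x) = Fintype.card β * G₁.degree u + G₂.degree x := by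
  rw [← card_neighborFinset_eq_degree, neighborFinset_lexProd, Finset.card_union_of_disjoint]
  · simp [mul_comm]
  · simp only [Finset.disjoint_left, Finset.mem_product, mem_neighborFinset,
      Finset.mem_singleton]
    rintro ⟨v, y⟩ ⟨h, -⟩ ⟨rfl, -⟩
    exact G₁.loopless.irrefl v h

variable {G₁ G₂} in
theorem IsRegularOfDegree.lexProd {d₁ d₂ : ℕ} (h₁ : G₁.IsRegularOfDegree d₁)
    (h₂ : G₂.IsRegularOfDegree d₂) :
    (lexProd G₁ G₂).IsRegularOfDegree (Fintype.card β * d₁ + d₂) := fun p => by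
  rw [degree_lexProd, h₁.degree_eq, h₂.degree_eq]

end lexProd

end SimpleGraph

open Kronecker in
theorem lexProd_hadamardDiagonalizable_general {m n : ℕ} (hm : 0 < m) (hn : 0 < n)
    (G₁ : SimpleGraph (Fin m)) (G₂ : SimpleGraph (Fin n))
    (H₁ : Matrix (Fin m) (Fin m) ℝ) (H₂ : Matrix (Fin n) (Fin n) ℝ)
    (hH₁ : IsHadamardMatrix H₁) (hH₂ : IsHadamardMatrix H₂)
    (hn₂ : ∀ j, H₂ j ⟨0, hn⟩ = 1 ∧ H₂ ⟨0, hn⟩ j = 1)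
    (Λ₁ : Fin m → ℝ) (Λ₂ : Fin n → ℝ)
    (hd₁ : lap G₁ = (m : ℝ)⁻¹ • (H₁ * Matrix.diagonal Λ₁ * H₁ᵀ))
    (hd₂ : lap G₂ = (n : ℝ)⁻¹ • (H₂ * Matrix.diagonal Λ₂ * H₂ᵀ)) :
    IsHadamardMatrixGen (H₁ ⊗ₖ H₂) ∧
    ∃ Λ : Fin m × Fin n → ℝ,
      lapP (lexProd G₁ G₂) =
        ((m : ℝ) * n)⁻¹ • ((H₁ ⊗ₖ H₂) * Matrix.diagonal Λ * (H₁ ⊗ₖ H₂)ᵀ) := by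
  classical
  have hm₀ : (m : ℝ) ≠ 0 := Nat.cast_ne_zero.mpr hm.ne'
  have hn₀ : (n : ℝ) ≠ 0 := Nat.cast_ne_zero.mpr hn.ne'
  have one₁ := one_mem_diagonalizedBy hm₀ hH₁.2
  have one₂ := one_mem_diagonalizedBy hn₀ hH₂.2
  have lap₁ : lap G₁ ∈ diagonalizedBy H₁ := hd₁ ▸ Submodule.smul_mem _ _ ⟨Λ₁, rfl⟩
  have lap₂ : lap G₂ ∈ diagonalizedBy H₂ := hd₂ ▸ Submodule.smul_mem _ _ ⟨Λ₂, rfl⟩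
  obtain ⟨d₁, reg₁⟩ := G₁.exists_isRegularOfDegree_of_lapMatrix_mem_diagonalizedBy hH₁.1 lap₁
  obtain ⟨d₂, reg₂⟩ := G₂.exists_isRegularOfDegree_of_lapMatrix_mem_diagonalizedBy hH₂.1 lap₂
  have adj₁ := reg₁.adjMatrix_mem one₁ lap₁
  have adj₂ := reg₂.adjMatrix_mem one₂ lap₂
  have ones₂ := of_one_mem_diagonalizedBy fun j => (hn₂ j).1
  obtain ⟨Λ, hΛ⟩ : lapP (lexProd G₁ G₂) ∈ diagonalizedBy (H₁ ⊗ₖ H₂) := by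
    rw [lapP, (reg₁.lexProd reg₂).lapMatrix_eq, SimpleGraph.adjMatrix_lexProd,
      ← one_kronecker_one]
    exact sub_mem (Submodule.smul_mem _ _ (kronecker_mem_diagonalizedBy one₁ one₂))
      (add_mem (kronecker_mem_diagonalizedBy one₁ adj₂)
        (kronecker_mem_diagonalizedBy adj₁ ones₂))
  refine ⟨hH₁.isHadamardMatrixGen.kronecker hH₂.isHadamardMatrixGen, ((m : ℝ) * n) • Λ, ?_⟩
  rw [← hΛ, diagonal_smul, Matrix.mul_smul, Matrix.smul_mul, smul_smul,
    inv_mul_cancel₀ (mul_ne_zero hm₀ hn₀), one_smul]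

open Kronecker in
theorem lexProd_hadamardDiagonalizable {m n : ℕ} (hm : 0 < m) (hn : 0 < n)
    (G₁ : SimpleGraph (Fin m)) (G₂ : SimpleGraph (Fin n))
    (H₁ : Matrix (Fin m) (Fin m) ℝ) (H₂ : Matrix (Fin n) (Fin n) ℝ)
    (hH₁ : IsHadamardMatrix H₁) (hH₂ : IsHadamardMatrix H₂)
    (hn₁ : ∀ j, H₁ j ⟨0, hm⟩ = 1 ∧ H₁ ⟨0, hm⟩ j = 1)
    (hn₂ : ∀ j, H₂ j ⟨0, hn⟩ = 1 ∧ H₂ ⟨0, hn⟩ j = 1)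
    (Λ₁ : Fin m → ℝ) (Λ₂ : Fin n → ℝ)
    (hd₁ : lap G₁ = (m : ℝ)⁻¹ • (H₁ * Matrix.diagonal Λ₁ * H₁ᵀ))
    (hd₂ : lap G₂ = (n : ℝ)⁻¹ • (H₂ * Matrix.diagonal Λ₂ * H₂ᵀ)) :
    IsHadamardMatrixGen (H₁ ⊗ₖ H₂) ∧
    ∃ Λ : Fin m × Fin n → ℝ,
      lapP (lexProd G₁ G₂) =
        ((m : ℝ) * n)⁻¹ • ((H₁ ⊗ₖ H₂) * Matrix.diagonal Λ * (H₁ ⊗ₖ H₂)ᵀ) :=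
  lexProd_hadamardDiagonalizable_general hm hn G₁ G₂ H₁ H₂ hH₁ hH₂ hn₂ Λ₁ Λ₂ hd₁ hd₂
end

section
/- If G₁ and G₂ are Hadamard diagonalizable graphs, then their Cartesian product G₁ □ G₂ is Hadamard diagonalizable, diagonalized by the Kronecker product H₁ ⊗ H₂ of diagonalizing Hadamard matrices of G₁ and G₂. -/
open Matrix

/-! The Laplacian of `G₁ □ G₂` is the Kronecker sum `L₁ ⊗ I + I ⊗ L₂`. A Hadamard matrix of
order `n` satisfies `H Hᵀ = n I`, so the identity factors can be written as `n⁻¹ H Hᵀ`, and the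
mixed-product property turns the Kronecker sum into `(mn)⁻¹ (H₁ ⊗ H₂) diag(λᵢ + μⱼ) (H₁ ⊗ H₂)ᵀ`.
The Kronecker product `H₁ ⊗ H₂` is again Hadamard: its entries are products of signs, and
`(H₁ ⊗ H₂)ᵀ (H₁ ⊗ H₂) = H₁ᵀ H₁ ⊗ H₂ᵀ H₂`. -/

open Kronecker

namespace SimpleGraph

variable {V W : Type*} [DecidableEq V] [DecidableEq W]
  (G : SimpleGraph V) (H : SimpleGraph W) [DecidableRel G.Adj] [DecidableRel H.Adj]
  [DecidableRel (G □ H).Adj] (R : Type*) [Ring R]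

theorem adjMatrix_boxProd :
    (G □ H).adjMatrix R = G.adjMatrix R ⊗ₖ 1 + 1 ⊗ₖ H.adjMatrix R := by
  ext ⟨a, b⟩ ⟨c, d⟩
  by_cases hac : a = c
  · subst hac
    by_cases hbd : b = d <;> simp [adjMatrix_apply, one_apply, hbd]
  · by_cases hbd : b = d <;> simp [adjMatrix_apply, one_apply, hac, hbd]

variable [Fintype V] [Fintype W]

theorem degMatrix_boxProd :
    (G □ H).degMatrix R = G.degMatrix R ⊗ₖ 1 + 1 ⊗ₖ H.degMatrix R := by
  simp only [degMatrix, ← diagonal_one, diagonal_kronecker_diagonal, diagonal_add, mul_one,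
    one_mul, degree_boxProd, Nat.cast_add]

theorem lapMatrix_boxProd :
    (G □ H).lapMatrix R = G.lapMatrix R ⊗ₖ 1 + 1 ⊗ₖ H.lapMatrix R := by
  ext i j
  simp only [lapMatrix, degMatrix_boxProd, adjMatrix_boxProd, Matrix.sub_apply,
    Matrix.add_apply, kroneckerMap_apply, sub_mul, mul_sub]
  abel

end SimpleGraph

theorem isHadamardMatrixGen_iff {n : ℕ} (H : Matrix (Fin n) (Fin n) ℝ) :
    IsHadamardMatrixGen H ↔ IsHadamardMatrix H := by
  rw [IsHadamardMatrixGen, IsHadamardMatrix, Fintype.card_fin]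

namespace IsHadamardMatrixGen

variable {ι κ : Type*} [Fintype ι] [Fintype κ] [DecidableEq ι] [DecidableEq κ]
  {H₁ : Matrix ι ι ℝ} {H₂ : Matrix κ κ ℝ}

theorem mul_transpose (hH : IsHadamardMatrixGen H₁) :
    H₁ * H₁ᵀ = (Fintype.card ι : ℝ) • 1 := by
  rcases isEmpty_or_nonempty ι with _ | _
  · exact Subsingleton.elim _ _
  have hcard : (Fintype.card ι : ℝ) ≠ 0 := by positivity
  have hinv : ((Fintype.card ι : ℝ)⁻¹ • H₁ᵀ) * H₁ = 1 := by
    rw [Matrix.smul_mul, hH.2, smul_smul, inv_mul_cancel₀ hcard, one_smul]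
  calc H₁ * H₁ᵀ = (Fintype.card ι : ℝ) • (H₁ * ((Fintype.card ι : ℝ)⁻¹ • H₁ᵀ)) := by
        rw [Matrix.mul_smul, smul_smul, mul_inv_cancel₀ hcard, one_smul]
    _ = (Fintype.card ι : ℝ) • 1 := by rw [mul_eq_one_comm.mp hinv]

theorem kronecker_s17 (hH₁ : IsHadamardMatrixGen H₁) (hH₂ : IsHadamardMatrixGen H₂) :
    IsHadamardMatrixGen (H₁ ⊗ₖ H₂) := by
  refine ⟨fun ⟨i₁, i₂⟩ ⟨j₁, j₂⟩ => ?_, ?_⟩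
  · rcases hH₁.1 i₁ j₁ with h₁ | h₁ <;> rcases hH₂.1 i₂ j₂ with h₂ | h₂ <;>
      simp [h₁, h₂]
  · rw [← kroneckerMap_transpose, ← mul_kronecker_mul, hH₁.2, hH₂.2, smul_kronecker,
      kronecker_smul, one_kronecker_one, smul_smul, Fintype.card_prod, Nat.cast_mul, mul_comm]

end IsHadamardMatrixGen

section KroneckerSum

variable {R : Type*} [CommRing R] {ι κ : Type*} [Fintype ι] [Fintype κ] [DecidableEq ι]
  [DecidableEq κ] (H₁ : Matrix ι ι R) (H₂ : Matrix κ κ R) (a : ι → R) (b : κ → R)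

theorem kronecker_mul_diagonal_add_mul_transpose :
    (H₁ ⊗ₖ H₂) * diagonal (fun p => a p.1 + b p.2) * (H₁ ⊗ₖ H₂)ᵀ =
      (H₁ * diagonal a * H₁ᵀ) ⊗ₖ (H₂ * H₂ᵀ) + (H₁ * H₁ᵀ) ⊗ₖ (H₂ * diagonal b * H₂ᵀ) := by
  have hdiag : diagonal (fun p : ι × κ => a p.1 + b p.2) =
      diagonal a ⊗ₖ 1 + 1 ⊗ₖ diagonal b := by
    rw [← diagonal_one, ← diagonal_one, diagonal_kronecker_diagonal, diagonal_kronecker_diagonal,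
      diagonal_add]
    simp only [mul_one, one_mul]
  rw [hdiag, ← kroneckerMap_transpose, Matrix.mul_add, Matrix.add_mul, ← mul_kronecker_mul,
    ← mul_kronecker_mul, ← mul_kronecker_mul, ← mul_kronecker_mul, Matrix.mul_one, Matrix.mul_one]

end KroneckerSum

open Kronecker in
theorem boxProd_hadamardDiagonalizable {m n : ℕ}
    (G₁ : SimpleGraph (Fin m)) (G₂ : SimpleGraph (Fin n))
    (H₁ : Matrix (Fin m) (Fin m) ℝ) (H₂ : Matrix (Fin n) (Fin n) ℝ)
    (hH₁ : IsHadamardMatrix H₁) (hH₂ : IsHadamardMatrix H₂)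
    (Λ₁ : Fin m → ℝ) (Λ₂ : Fin n → ℝ)
    (hd₁ : lap G₁ = (m : ℝ)⁻¹ • (H₁ * Matrix.diagonal Λ₁ * H₁ᵀ))
    (hd₂ : lap G₂ = (n : ℝ)⁻¹ • (H₂ * Matrix.diagonal Λ₂ * H₂ᵀ)) :
    IsHadamardMatrixGen (H₁ ⊗ₖ H₂) ∧
    ∃ Λ : Fin m × Fin n → ℝ,
      lapP (G₁ □ G₂) =
        ((m : ℝ) * n)⁻¹ • ((H₁ ⊗ₖ H₂) * Matrix.diagonal Λ * (H₁ ⊗ₖ H₂)ᵀ) := by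
  have hK₁ := (isHadamardMatrixGen_iff H₁).2 hH₁
  have hK₂ := (isHadamardMatrixGen_iff H₂).2 hH₂
  refine ⟨hK₁.kronecker_s17 hK₂, fun p => Λ₁ p.1 + Λ₂ p.2, ?_⟩
  rcases isEmpty_or_nonempty (Fin m × Fin n) with _ | ⟨i, j⟩
  · exact Subsingleton.elim _ _
  have hm : (m : ℝ) ≠ 0 := Nat.cast_ne_zero.2 i.pos.ne'
  have hn : (n : ℝ) ≠ 0 := Nat.cast_ne_zero.2 j.pos.ne'
  have h₁ : H₁ * H₁ᵀ = (m : ℝ) • 1 := by simpa using hK₁.mul_transpose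
  have h₂ : H₂ * H₂ᵀ = (n : ℝ) • 1 := by simpa using hK₂.mul_transpose
  classical
  rw [lapP, SimpleGraph.lapMatrix_boxProd, ← lap, ← lap, hd₁, hd₂,
    kronecker_mul_diagonal_add_mul_transpose, h₁, h₂]
  simp only [smul_kronecker, kronecker_smul, smul_add, smul_smul]
  congr 2 <;> field_simp
end
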